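/- Let 0 < ε ≤ 1 and let c : (0,∞) → [0,∞) be measurable with ∫₀^∞ (1+x) c(x) dx ≤ M < ∞. Then [ε ∫₀^∞ x^{−2/3}(1+x/ε)^{1/3} c(x) dx]² ≤ 2^{4/3} M · ε ∫₀^∞ x^{−4/3}(1+x/ε)^{1/3} c(x) dx. -/

import Mathlib

/-!
With `w x = (1 + x/ε)^(1/3)`, the integrand `x^(-2/3) w c` is the geometric mean of
`x^(-4/3) w c` and `w c`, so Cauchy–Schwarz bounds the square of its integral by
`(∫ x^(-4/3) w c) (∫ w c)`. Since `w ≥ 1` and the exponent is at most one,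
`ε w ≤ ε (1 + x/ε) = ε + x ≤ 1 + x`, hence `ε ∫ w c ≤ M`; the constant `2^(4/3) ≥ 1` is slack.
-/

open MeasureTheory Set

theorem sq_integral_le_integral_mul_integral {α : Type*} [MeasurableSpace α] {μ : Measure α}
    {f g h : α → ℝ} (hf : Integrable f μ) (hg : Integrable g μ) (hf0 : 0 ≤ᵐ[μ] f)
    (hg0 : 0 ≤ᵐ[μ] g) (hh0 : 0 ≤ᵐ[μ] h) (hfg : ∀ᵐ x ∂μ, h x ^ 2 = f x * g x) :
    (∫ x, h x ∂μ) ^ 2 ≤ (∫ x, f x ∂μ) * ∫ x, g x ∂μ := by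
  have h_eq : h =ᵐ[μ] fun x => √(f x) * √(g x) := by
    filter_upwards [hf0, hg0, hh0, hfg] with x hfx hgx hhx hx
    rw [← Real.sqrt_mul hfx, ← hx, Real.sqrt_sq hhx]
  have memLp_sqrt : ∀ {u : α → ℝ}, Integrable u μ → 0 ≤ᵐ[μ] u →
      MemLp (fun x => √(u x)) (ENNReal.ofReal 2) μ := fun hu hu0 => by
    rw [show ENNReal.ofReal 2 = 2 by norm_num,
      memLp_two_iff_integrable_sq (Real.continuous_sqrt.comp_aestronglyMeasurable hu.1)]
    exact hu.congr (hu0.mono fun x hx => (Real.sq_sqrt hx).symm)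
  have integral_sqrt_rpow : ∀ {u : α → ℝ}, 0 ≤ᵐ[μ] u →
      ∫ x, √(u x) ^ (2:ℝ) ∂μ = ∫ x, u x ∂μ := fun hu0 =>
    integral_congr_ae (hu0.mono fun x hx => by simp [Real.sq_sqrt hx])
  have holder := integral_mul_le_Lp_mul_Lq_of_nonneg Real.HolderConjugate.two_two
    (.of_forall fun x => Real.sqrt_nonneg (f x)) (.of_forall fun x => Real.sqrt_nonneg (g x))
    (memLp_sqrt hf hf0) (memLp_sqrt hg hg0)
  rw [← integral_congr_ae h_eq, integral_sqrt_rpow hf0, integral_sqrt_rpow hg0,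
    ← Real.sqrt_eq_rpow, ← Real.sqrt_eq_rpow] at holder
  calc (∫ x, h x ∂μ) ^ 2 ≤ (√(∫ x, f x ∂μ) * √(∫ x, g x ∂μ)) ^ 2 :=
        pow_le_pow_left₀ (integral_nonneg_of_ae hh0) holder 2
    _ = (∫ x, f x ∂μ) * ∫ x, g x ∂μ := by
        rw [mul_pow, Real.sq_sqrt (integral_nonneg_of_ae hf0),
          Real.sq_sqrt (integral_nonneg_of_ae hg0)]

theorem mul_one_add_div_rpow_le {ε x p : ℝ} (hε : 0 < ε) (hε1 : ε ≤ 1) (hx : 0 ≤ x)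
    (hp : p ≤ 1) : ε * (1 + x / ε) ^ p ≤ 1 + x := by
  have hbase : 1 ≤ 1 + x / ε := le_add_of_nonneg_right (div_nonneg hx hε.le)
  calc ε * (1 + x / ε) ^ p ≤ ε * (1 + x / ε) :=
        mul_le_mul_of_nonneg_left (Real.rpow_le_self_of_one_le hbase hp) hε.le
    _ = ε + x := by field_simp
    _ ≤ 1 + x := by linarith

section WeightedMoments

variable {ε p : ℝ} {c : ℝ → ℝ}

theorem integrableOn_one_add_div_rpow_mul (hε : 0 < ε) (hε1 : ε ≤ 1) (hp : p ≤ 1)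
    (hc : ∀ x ∈ Ioi (0:ℝ), 0 ≤ c x) (h1 : IntegrableOn (fun x => (1 + x) * c x) (Ioi 0)) :
    IntegrableOn (fun x => (1 + x / ε) ^ p * c x) (Ioi 0) := by
  have hmeas :
      AEStronglyMeasurable (fun x => (1 + x / ε) ^ p * c x) (volume.restrict (Ioi 0)) := by
    have hk : Measurable fun x : ℝ => (1 + x / ε) ^ p / (1 + x) := by fun_prop
    refine (hk.aestronglyMeasurable.mul h1.1).congr ?_
    filter_upwards [ae_restrict_mem measurableSet_Ioi] with x (hx : 0 < x)
    simp only [Pi.mul_apply]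
    field_simp
  refine (h1.const_mul ε⁻¹).mono' hmeas ?_
  filter_upwards [ae_restrict_mem measurableSet_Ioi] with x (hx : 0 < x)
  rw [Real.norm_of_nonneg (mul_nonneg (by positivity) (hc x hx)), le_inv_mul_iff₀ hε, ← mul_assoc]
  exact mul_le_mul_of_nonneg_right (mul_one_add_div_rpow_le hε hε1 hx.le hp) (hc x hx)

theorem mul_integral_one_add_div_rpow_mul_le (hε : 0 < ε) (hε1 : ε ≤ 1) (hp : p ≤ 1)
    (hc : ∀ x ∈ Ioi (0:ℝ), 0 ≤ c x) (h1 : IntegrableOn (fun x => (1 + x) * c x) (Ioi 0)) :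
    ε * ∫ x in Ioi 0, (1 + x / ε) ^ p * c x ≤ ∫ x in Ioi 0, (1 + x) * c x := by
  rw [← integral_const_mul]
  refine setIntegral_mono_on ((integrableOn_one_add_div_rpow_mul hε hε1 hp hc h1).const_mul ε)
    h1 measurableSet_Ioi fun x (hx : 0 < x) => ?_
  rw [← mul_assoc]
  exact mul_le_mul_of_nonneg_right (mul_one_add_div_rpow_le hε hε1 hx.le hp) (hc x hx)

end WeightedMoments

theorem stmt_3 (ε M : ℝ) (hε : 0 < ε) (hε1 : ε ≤ 1) (c : ℝ → ℝ)
    (hnn : ∀ x ∈ Ioi (0:ℝ), 0 ≤ c x)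
    (h1 : IntegrableOn (fun x => (1+x) * c x) (Ioi 0))
    (h4 : IntegrableOn (fun x => x ^ (-(4:ℝ)/3) * (1+x/ε) ^ ((1:ℝ)/3) * c x) (Ioi 0))
    (hM : ∫ x in Ioi (0:ℝ), (1+x) * c x ≤ M) :
    (ε * ∫ x in Ioi (0:ℝ), x ^ (-(2:ℝ)/3) * (1+x/ε) ^ ((1:ℝ)/3) * c x) ^ 2
      ≤ 2 ^ ((4:ℝ)/3) * M *
        (ε * ∫ x in Ioi (0:ℝ), x ^ (-(4:ℝ)/3) * (1+x/ε) ^ ((1:ℝ)/3) * c x) := by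
  set μ := volume.restrict (Ioi (0:ℝ))
  have hpos : ∀ᵐ x ∂μ, 0 < x := ae_restrict_mem measurableSet_Ioi
  have weighted_nonneg : ∀ {a : ℝ → ℝ}, (∀ x, 0 < x → 0 ≤ a x) → 0 ≤ᵐ[μ] fun x => a x * c x :=
    fun ha => hpos.mono fun x hx => mul_nonneg (ha x hx) (hnn x hx)
  have hG := integrableOn_one_add_div_rpow_mul hε hε1 (p := 1/3) (by norm_num) hnn h1
  have hεG : ε * ∫ x in Ioi 0, (1 + x / ε) ^ ((1:ℝ)/3) * c x ≤ M :=
    (mul_integral_one_add_div_rpow_mul_le hε hε1 (by norm_num) hnn h1).trans hM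
  have hCS := sq_integral_le_integral_mul_integral
    (h := fun x => x ^ (-(2:ℝ)/3) * (1+x/ε) ^ ((1:ℝ)/3) * c x) h4 hG
    (weighted_nonneg fun x _ => by positivity) (weighted_nonneg fun x _ => by positivity)
    (weighted_nonneg fun x _ => by positivity) <| by
      filter_upwards [hpos] with x hx
      have hx43 : x ^ (-(4:ℝ)/3) = (x ^ (-(2:ℝ)/3)) ^ 2 := by
        rw [← Real.rpow_natCast, ← Real.rpow_mul hx.le]; norm_num
      rw [hx43]; ring
  have hF0 : 0 ≤ ∫ x in Ioi 0, x ^ (-(4:ℝ)/3) * (1+x/ε) ^ ((1:ℝ)/3) * c x :=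
    integral_nonneg_of_ae (weighted_nonneg fun x _ => by positivity)
  have hM0 : 0 ≤ M := (mul_nonneg hε.le (integral_nonneg_of_ae
    (weighted_nonneg fun x _ => by positivity))).trans hεG
  have h_one_le : (1:ℝ) ≤ 2 ^ ((4:ℝ)/3) := Real.one_le_rpow one_le_two (by norm_num)
  calc _ = ε ^ 2 * (∫ x in Ioi 0, x ^ (-(2:ℝ)/3) * (1+x/ε) ^ ((1:ℝ)/3) * c x) ^ 2 := by ring
    _ ≤ ε ^ 2 * ((∫ x in Ioi 0, x ^ (-(4:ℝ)/3) * (1+x/ε) ^ ((1:ℝ)/3) * c x) *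
          ∫ x in Ioi 0, (1 + x / ε) ^ ((1:ℝ)/3) * c x) := by gcongr
    _ = (ε * ∫ x in Ioi 0, (1 + x / ε) ^ ((1:ℝ)/3) * c x) *
          (ε * ∫ x in Ioi 0, x ^ (-(4:ℝ)/3) * (1+x/ε) ^ ((1:ℝ)/3) * c x) := by ring
    _ ≤ M * (ε * ∫ x in Ioi 0, x ^ (-(4:ℝ)/3) * (1+x/ε) ^ ((1:ℝ)/3) * c x) := by gcongr
    _ ≤ _ := by gcongr; exact le_mul_of_one_le_left hM0 h_one_le
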